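/- Let σ₁ ≺ σ₂ ≺ … ≺ σ_m be sign strings, each a proper substring of the next, let θ: [0,1] → ℝ be continuous, let φ ∈ ℝ, and let ε₁,…,ε_m ∈ (0, π/4) be such that θ is (φ,ε_j)-quasicritical of type σ_j for every j ∈ {1,…,m}. Then ε_{j+1} > 2·ε_j for each j ∈ {1,…,m−1}. -/
import Mathlib


open Real

/-- A sign string of length `m` (values `±1`, alternating), 0-indexed. -/
def IsSignString (m : ℕ) (s : ℕ → ℝ) : Prop :=
  2 ≤ m ∧ (∀ j < m, s j = 1 ∨ s j = -1) ∧ ∀ j, j + 1 < m → s (j + 1) = - s j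

/-- `(m₁, s₁)` is a substring of `(m₂, s₂)`: `s₁ = s₂ ∘ f` for some strictly
increasing `f`. -/
def SubstringOf (m₁ : ℕ) (s₁ : ℕ → ℝ) (m₂ : ℕ) (s₂ : ℕ → ℝ) : Prop :=
  ∃ f : ℕ → ℕ, (∀ i j, i < j → j < m₁ → f i < f j) ∧ (∀ i < m₁, f i < m₂) ∧
    ∀ i < m₁, s₁ i = s₂ (f i)

/-- `θ` is `(φ,ε)`-quasicritical of type the sign string `(n, s)`: there are closed
intervals `J_k = [a k, c k]` (`k < n`), `J₀ < … < J_{n-1}`, inside `[0,1]` such that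
(i) `θ(J_k) ⊆ (φ₋+2ε, φ₊+ε)` if `s k = 1` and `θ(J_k) ⊆ (φ₋−ε, φ₊−2ε)` if `s k = −1`;
(ii) `|θ(t) − φ| < π/2 − 2ε` for `t ∈ [0,1]` outside the interior of `⋃ J_k`;
(iii) each `J_k` contains a closed subinterval on which `|θ − φ_{s k}| < ε`. -/
def Quasicritical (θ : ℝ → ℝ) (φ ε : ℝ) (n : ℕ) (s : ℕ → ℝ) : Prop :=
  ∃ a c : ℕ → ℝ,
    (∀ k < n, 0 ≤ a k ∧ a k ≤ c k ∧ c k ≤ 1) ∧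
    (∀ k, k + 1 < n → c k < a (k + 1)) ∧
    (∀ k < n, s k = 1 → ∀ t ∈ Set.Icc (a k) (c k),
        θ t ∈ Set.Ioo (φ - π / 2 + 2 * ε) (φ + π / 2 + ε)) ∧
    (∀ k < n, s k = -1 → ∀ t ∈ Set.Icc (a k) (c k),
        θ t ∈ Set.Ioo (φ - π / 2 - ε) (φ + π / 2 - 2 * ε)) ∧
    (∀ t ∈ Set.Icc (0 : ℝ) 1,
        t ∉ interior (⋃ k ∈ Finset.range n, Set.Icc (a k) (c k)) →
        |θ t - φ| < π / 2 - 2 * ε) ∧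
    (∀ k < n, ∃ p q : ℝ, a k ≤ p ∧ p ≤ q ∧ q ≤ c k ∧
        ∀ t ∈ Set.Icc p q, |θ t - (φ + s k * (π / 2))| < ε)


private lemma consec_mono (f : ℕ → ℕ) (n : ℕ) (h : ∀ i, i + 1 < n → f i < f (i + 1)) :
    ∀ k i, i + k < n → f i + k ≤ f (i + k) := by
  intro k
  induction k with
  | zero => intro i _; exact le_refl _
  | succ k ih =>
    intro i hik
    have h1 := ih i (by omega)
    have h2 := h (i + k) (by omega)
    show f i + (k + 1) ≤ f (i + k + 1)
    omega

private lemma chain_lt (n : ℕ) (a c : ℕ → ℝ) (hac : ∀ k < n, a k ≤ c k)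
    (hsep : ∀ k, k + 1 < n → c k < a (k + 1)) :
    ∀ d l, 1 ≤ d → l + d < n → c l < a (l + d) := by
  intro d
  induction d with
  | zero => intro l h1 _; exfalso; omega
  | succ d ih =>
    intro l h1 h2
    show c l < a (l + d + 1)
    rcases Nat.eq_zero_or_pos d with hd | hd
    · subst hd
      exact hsep l (by omega)
    · have h3 := ih l hd (by omega)
      have h4 := hac (l + d) (by omega)
      have h5 := hsep (l + d) (by omega)
      linarith

/-- If `θ` is `(φ,ε_j)`-quasicritical of type `σ_j` for a chain
`σ₁ ≺ σ₂ ≺ … ≺ σ_m` of sign strings, each a proper substring of the next, then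
`ε_{j+1} > 2 ε_j` for each `j`. (Strings are 0-indexed: `σ_{j+1}` is `s j` of length
`len j`.) -/
theorem stmt18 (m : ℕ) (len : ℕ → ℕ) (s : ℕ → ℕ → ℝ)
    (hss : ∀ j < m, IsSignString (len j) (s j))
    (hchain : ∀ j, j + 1 < m →
      SubstringOf (len j) (s j) (len (j + 1)) (s (j + 1)) ∧
      ¬(len j = len (j + 1) ∧ ∀ i < len j, s j i = s (j + 1) i))
    (θ : ℝ → ℝ) (hθ : ContinuousOn θ (Set.Icc (0 : ℝ) 1)) (φ : ℝ) (ε : ℕ → ℝ)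
    (hε : ∀ j < m, ε j ∈ Set.Ioo (0 : ℝ) (π / 4))
    (hq : ∀ j < m, Quasicritical θ φ (ε j) (len j) (s j)) :
    ∀ j, j + 1 < m → 2 * ε j < ε (j + 1) := by
  intro j hj
  by_contra hcon
  push_neg at hcon
  set n := len j with hn
  set n' := len (j + 1) with hn'
  obtain ⟨hm2, hsv, -⟩ := hss j (by omega)
  obtain ⟨hm2', hsv', halt'⟩ := hss (j + 1) hj
  obtain ⟨⟨f, hfmono, hflt, hfeq⟩, hproper⟩ := hchain j hj
  obtain ⟨a, c, hJ, hsepa, hpos, hneg, hout, hinner⟩ := hq j (by omega)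
  obtain ⟨a', c', hJ', hsep', hpos', hneg', hout', hinner'⟩ := hq (j + 1) hj
  have hac : ∀ k < n, a k ≤ c k := fun k hk => (hJ k hk).2.1
  -- choose inner points of the σ'-intervals
  have hT : ∀ k, k < n' → ∃ t : ℝ, a' k ≤ t ∧ t ≤ c' k ∧
      |θ t - (φ + s (j + 1) k * (π / 2))| < ε (j + 1) := by
    intro k hk
    obtain ⟨p, q, h1, h2, h3, h4⟩ := hinner' k hk
    exact ⟨p, h1, le_trans h2 h3, h4 p ⟨le_refl _, h2⟩⟩
  choose! t ht1 ht2 ht3 using hT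
  -- each inner point lies in a σ-interval of matching sign
  have hG : ∀ k, k < n' → ∃ l, l < n ∧ a l ≤ t k ∧ t k ≤ c l ∧ s j l = s (j + 1) k := by
    intro k hk
    have hJ'k := hJ' k hk
    have htm : t k ∈ Set.Icc (0 : ℝ) 1 :=
      ⟨le_trans hJ'k.1 (ht1 k hk), le_trans (ht2 k hk) hJ'k.2.2⟩
    have habs := abs_lt.mp (ht3 k hk)
    have hbig : ¬ |θ (t k) - φ| < π / 2 - 2 * ε j := by
      intro hc
      have hc2 := abs_lt.mp hc
      rcases hsv' k hk with h | h <;> rw [h] at habs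
      · linarith [habs.1, hc2.2]
      · linarith [habs.2, hc2.1]
    have hmem : t k ∈ ⋃ l ∈ Finset.range n, Set.Icc (a l) (c l) := by
      have hint : t k ∈ interior (⋃ l ∈ Finset.range n, Set.Icc (a l) (c l)) := by
        by_contra hc
        exact hbig (hout (t k) htm hc)
      exact interior_subset hint
    simp only [Set.mem_iUnion, Finset.mem_range, exists_prop] at hmem
    obtain ⟨l, hl, hmeml⟩ := hmem
    refine ⟨l, hl, hmeml.1, hmeml.2, ?_⟩
    rcases hsv l hl with hsl | hsl <;> rcases hsv' k hk with hsk | hsk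
    · rw [hsl, hsk]
    · exfalso
      have hp := (hpos l hl hsl (t k) hmeml).1
      rw [hsk] at habs
      linarith [habs.2]
    · exfalso
      have hp := (hneg l hl hsl (t k) hmeml).2
      rw [hsk] at habs
      linarith [habs.1]
    · rw [hsl, hsk]
  choose! g hg1 hg2 hg3 hg4 using hG
  -- g is strictly increasing on consecutive indices
  have hgmono : ∀ k, k + 1 < n' → g k < g (k + 1) := by
    intro k hk1
    have hk : k < n' := by omega
    have hle : g k ≤ g (k + 1) := by
      by_contra hc
      push_neg at hc
      have hd : g (k + 1) + (g k - g (k + 1)) = g k := by omega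
      have hch := chain_lt n a c hac hsepa (g k - g (k + 1)) (g (k + 1)) (by omega)
        (by rw [hd]; exact hg1 k hk)
      rw [hd] at hch
      have h1 := hg2 k hk
      have h2 := ht2 k hk
      have h3 := hsep' k hk1
      have h4 := ht1 (k + 1) hk1
      have h5 := hg3 (k + 1) hk1
      linarith
    have hne : g k ≠ g (k + 1) := by
      intro he
      have e1 := hg4 k hk
      have e2 := hg4 (k + 1) hk1
      have e3 := halt' k hk1
      rw [he] at e1
      have hz : s (j + 1) k = - s (j + 1) k := e1.symm.trans (e2.trans e3)
      rcases hsv' k hk with h | h <;> rw [h] at hz <;> norm_num at hz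
    omega
  -- hence n' ≤ n
  have hnn : n' ≤ n := by
    have h1 := consec_mono g n' hgmono (n' - 1) 0 (by omega)
    have h2 := hg1 (0 + (n' - 1)) (by omega)
    omega
  -- from the substring map, n ≤ n'
  have hfc : ∀ i, i + 1 < n → f i < f (i + 1) := fun i hi => hfmono i (i + 1) (by omega) hi
  have hnn' : n ≤ n' := by
    have h1 := consec_mono f n hfc (n - 1) 0 (by omega)
    have h2 := hflt (0 + (n - 1)) (by omega)
    omega
  have heq : n = n' := le_antisymm hnn' hnn
  -- then f is the identity, so the strings are equal: contradiction
  have hfid : ∀ i < n, f i = i := by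
    intro i hi
    have h1 := consec_mono f n hfc i 0 (by omega)
    have h2 := consec_mono f n hfc (n - 1 - i) i (by omega)
    have h3 : i + (n - 1 - i) = n - 1 := by omega
    rw [h3] at h2
    have h4 := hflt (n - 1) (by omega)
    have h5 : (0 : ℕ) + i = i := by omega
    rw [h5] at h1
    omega
  exact hproper ⟨heq, fun i hi => by rw [hfeq i hi, hfid i hi]⟩
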